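/- arXiv:2605.26477 — 2 statements merged into one kernel-verified Lean document; each statement's English description precedes it below -/
import Mathlib

section
/- Let a and l be real numbers with a ≥ l ≥ 1. Then 0 ≤ (a − l)·ψ′(a) < 1 + 1/l. -/
/-- The digamma function `ψ`, i.e. the derivative of `x ↦ log Γ(x)`. -/
noncomputable def digamma (x : ℝ) : ℝ := deriv (fun y : ℝ => Real.log (Real.Gamma y)) x

/-- The trigamma function `ψ′`, i.e. the derivative of the digamma function. -/
noncomputable def trigamma (x : ℝ) : ℝ := deriv digamma x

/-!
Convexity of `log Γ` on `(0, ∞)` makes `ψ` monotone and squeezes `ψ (x + 1)` between `log x`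
and `log (x + 1)`. Shifting by `ψ (x + 1) = ψ x + 1 / x` then gives, for `1/2 < x ≤ y` and every
`n`, `ψ y - ψ x ≤ ∑_{k ≤ n} (1 / (x + k) - 1 / (y + k)) + (y - x + 1) / (x + n)`, and the sum is
at most `(y - x) / (x - 1/2)` because `1 / (x + k)² ≤ 1 / (x + k - 1/2) - 1 / (x + k + 1/2)`
telescopes. So every slope of `ψ` to the right of `x` lies in `[0, 1 / (x - 1/2)]`, hence so does
`ψ' x`, and `(a - l) ψ' a ≤ (a - l) / (a - 1/2) < 1`.
-/
open Real Filter Topology Set Finset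

/-- `h0` accounts for the junk value `deriv f x = 0` where `f` is not differentiable. -/
lemma deriv_mem_of_eventually_slope_mem {f : ℝ → ℝ} {x : ℝ} {s : Set ℝ} (hs : IsClosed s)
    (h0 : (0 : ℝ) ∈ s) (hslope : ∀ᶠ y in 𝓝[>] x, slope f x y ∈ s) : deriv f x ∈ s := by
  by_cases hf : DifferentiableAt ℝ f x
  · have hlim : Tendsto (slope f x) (𝓝[>] x) (𝓝 (deriv f x)) :=
      (hasDerivAt_iff_tendsto_slope.1 hf.hasDerivAt).mono_left
        (nhdsWithin_mono x fun y hy => ne_of_gt hy)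
    exact hs.mem_of_tendsto hlim hslope
  · rwa [deriv_zero_of_not_differentiableAt hf]

lemma differentiableAt_log_Gamma {x : ℝ} (hx : 0 < x) :
    DifferentiableAt ℝ (fun y : ℝ => log (Gamma y)) x := by
  have hpole : ∀ m : ℕ, x ≠ -m := fun m => (neg_nonpos.2 m.cast_nonneg).trans_lt hx |>.ne'
  exact (differentiableAt_Gamma hpole).log (Gamma_ne_zero hpole)

lemma digamma_add_one {x : ℝ} (hx : 0 < x) : digamma (x + 1) = digamma x + 1 / x := by
  have hshift : (fun y : ℝ => log (Gamma (y + 1))) =ᶠ[𝓝 x]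
      fun y => log (Gamma y) + log y := by
    filter_upwards [eventually_gt_nhds hx] with y hy
    rw [Gamma_add_one hy.ne', log_mul hy.ne' (Gamma_pos_of_pos hy).ne', add_comm]
  have hderiv : HasDerivAt (fun y : ℝ => log (Gamma y) + log y) (digamma x + 1 / x) x := by
    rw [one_div]
    exact (differentiableAt_log_Gamma hx).hasDerivAt.add (hasDerivAt_log hx.ne')
  rw [digamma, ← deriv_comp_add_const, hshift.deriv_eq, hderiv.deriv]

lemma digamma_add_nat {x : ℝ} (hx : 0 < x) (n : ℕ) :
    digamma (x + n) = digamma x + ∑ k ∈ range n, 1 / (x + k) := by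
  induction n with
  | zero => simp
  | succ n ih =>
    rw [Nat.cast_succ, ← add_assoc, digamma_add_one (by positivity), ih, sum_range_succ,
      add_assoc]

lemma slope_log_Gamma_self_add_one {x : ℝ} (hx : 0 < x) :
    slope (log ∘ Gamma) x (x + 1) = log x := by
  rw [slope_def_field, Function.comp_apply, Function.comp_apply, Gamma_add_one hx.ne',
    log_mul hx.ne' (Gamma_pos_of_pos hx).ne', add_sub_cancel_right, add_sub_cancel_left, div_one]

lemma digamma_le_log {x : ℝ} (hx : 0 < x) : digamma x ≤ log x :=
  slope_log_Gamma_self_add_one hx ▸ convexOn_log_Gamma.deriv_le_slope (mem_Ioi.2 hx)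
    (mem_Ioi.2 (by linarith)) (lt_add_one x) (differentiableAt_log_Gamma hx)

lemma log_le_digamma_add_one {x : ℝ} (hx : 0 < x) : log x ≤ digamma (x + 1) :=
  slope_log_Gamma_self_add_one hx ▸ convexOn_log_Gamma.slope_le_deriv (mem_Ioi.2 hx)
    (mem_Ioi.2 (by linarith)) (lt_add_one x) (differentiableAt_log_Gamma (by linarith))

lemma monotoneOn_digamma : MonotoneOn digamma (Ioi 0) :=
  convexOn_log_Gamma.monotoneOn_deriv fun _ hx => differentiableAt_log_Gamma hx

lemma digamma_add_one_sub_le {x y : ℝ} (hx : 0 < x) (hy : 0 < y) :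
    digamma (y + 1) - digamma (x + 1) ≤ (y - x + 1) / x :=
  calc digamma (y + 1) - digamma (x + 1) ≤ log (y + 1) - log x :=
        sub_le_sub (digamma_le_log (by linarith)) (log_le_digamma_add_one hx)
    _ = log ((y + 1) / x) := (log_div (by positivity) hx.ne').symm
    _ ≤ (y + 1) / x - 1 := log_le_sub_one_of_pos (by positivity)
    _ = (y - x + 1) / x := by field_simp; ring

lemma inv_sub_inv_le_telescope {t s : ℝ} (ht : 1 / 2 < t) (hts : t ≤ s) :
    1 / t - 1 / s ≤ (s - t) * (1 / (t - 1 / 2) - 1 / (t + 1 / 2)) := by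
  have ht' : 0 < t - 1 / 2 := by linarith
  have hd : 0 ≤ s - t := sub_nonneg.2 hts
  have ht0 : 0 < t := by linarith
  have hs0 : 0 < s := by linarith
  rw [div_sub_div _ _ ht0.ne' hs0.ne', div_sub_div _ _ ht'.ne' (by positivity),
    ← mul_div_assoc, div_le_div_iff₀ (by positivity) (by positivity)]
  nlinarith [mul_nonneg hd (mul_nonneg hd ht'.le), mul_nonneg hd hd]

lemma sum_range_inv_sub_inv_le {x y : ℝ} (hx : 1 / 2 < x) (hxy : x ≤ y) (n : ℕ) :
    ∑ k ∈ range n, (1 / (x + k) - 1 / (y + k)) ≤ (y - x) / (x - 1 / 2) := by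
  set u : ℕ → ℝ := fun k => 1 / (x + k - 1 / 2)
  have hxk (k : ℕ) : 1 / 2 < x + k := by linarith [k.cast_nonneg (α := ℝ)]
  calc ∑ k ∈ range n, (1 / (x + k) - 1 / (y + k))
      ≤ ∑ k ∈ range n, (y - x) * (u k - u (k + 1)) := by
        refine sum_le_sum fun k _ => ?_
        have h := inv_sub_inv_le_telescope (hxk k) (add_le_add_left hxy (k : ℝ))
        simp only [u, Nat.cast_succ]
        rw [add_sub_add_right_eq_sub] at h
        rwa [show x + ((k : ℝ) + 1) - 1 / 2 = x + k + 1 / 2 by ring]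
    _ = (y - x) * (u 0 - u n) := by rw [← mul_sum, sum_range_sub']
    _ ≤ (y - x) / (x - 1 / 2) := by
        have : 0 ≤ (y - x) * u n :=
          mul_nonneg (sub_nonneg.2 hxy) (one_div_nonneg.2 (by linarith [hxk n]))
        simp only [u, Nat.cast_zero, add_zero] at this ⊢
        rw [mul_sub, ← div_eq_mul_one_div]
        linarith

lemma digamma_sub_le {x y : ℝ} (hx : 1 / 2 < x) (hxy : x ≤ y) :
    digamma y - digamma x ≤ (y - x) / (x - 1 / 2) := by
  have hx0 : 0 < x := by linarith
  have hbound (n : ℕ) :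
      digamma y - digamma x ≤ (y - x) / (x - 1 / 2) + (y - x + 1) / (x + n) := by
    have hsplit : digamma y - digamma x = (digamma (y + n + 1) - digamma (x + n + 1)) +
        ∑ k ∈ range (n + 1), (1 / (x + k) - 1 / (y + k)) := by
      rw [add_assoc y, add_assoc x, ← Nat.cast_add_one, digamma_add_nat hx0,
        digamma_add_nat (by linarith), sum_sub_distrib]
      ring
    have hrem := digamma_add_one_sub_le (x := x + n) (y := y + n) (by positivity)
      (by linarith [n.cast_nonneg (α := ℝ)])
    rw [add_sub_add_right_eq_sub] at hrem
    linarith [sum_range_inv_sub_inv_le hx hxy (n + 1)]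
  have hlim : Tendsto (fun n : ℕ => (y - x) / (x - 1 / 2) + (y - x + 1) / (x + n)) atTop
      (𝓝 ((y - x) / (x - 1 / 2) + 0)) :=
    tendsto_const_nhds.add <| tendsto_const_nhds.div_atTop <|
      tendsto_atTop_add_const_left _ _ tendsto_natCast_atTop_atTop
  rw [add_zero] at hlim
  exact ge_of_tendsto' hlim hbound

lemma trigamma_nonneg {x : ℝ} (hx : 0 < x) : 0 ≤ trigamma x := by
  refine deriv_mem_of_eventually_slope_mem (s := Ici 0) isClosed_Ici (Set.mem_Ici.2 le_rfl) ?_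
  filter_upwards [self_mem_nhdsWithin] with y hy
  exact monotoneOn_digamma.slope_nonneg hx (hx.trans hy)

lemma trigamma_le {x : ℝ} (hx : 1 / 2 < x) : trigamma x ≤ 1 / (x - 1 / 2) := by
  refine deriv_mem_of_eventually_slope_mem (s := Iic _) isClosed_Iic
    (Set.mem_Iic.2 (one_div_nonneg.2 (by linarith))) ?_
  filter_upwards [self_mem_nhdsWithin] with y hy
  have hxy : 0 < y - x := sub_pos.2 hy
  rw [Set.mem_Iic, slope_def_field, div_le_iff₀ hxy]
  exact (digamma_sub_le hx hy.le).trans_eq (by ring)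

/-- If `a ≥ l ≥ 1`, then `0 ≤ (a − l)·ψ′(a) < 1 + 1/l`. -/
theorem trigamma_term_bound (a l : ℝ) (hl : 1 ≤ l) (hal : l ≤ a) :
    0 ≤ (a - l) * trigamma a ∧ (a - l) * trigamma a < 1 + 1 / l := by
  have ha : 1 / 2 < a := by linarith
  refine ⟨mul_nonneg (sub_nonneg.2 hal) (trigamma_nonneg (by linarith)), ?_⟩
  calc (a - l) * trigamma a ≤ (a - l) * (1 / (a - 1 / 2)) :=
        mul_le_mul_of_nonneg_left (trigamma_le ha) (sub_nonneg.2 hal)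
    _ < 1 := by rw [mul_one_div, div_lt_one (by linarith)]; linarith
    _ < 1 + 1 / l := lt_add_of_pos_right 1 (by positivity)
end

section
/- Let K ≥ 1, β ≥ 0, let y ∈ [0,1]^K, let λ ∈ ℝ^K satisfy λ_j ≥ 1 for all j, and let α ∈ ℝ^K satisfy α_j ≥ λ_j for all j. Define the variational loss L(α) = Σ_{j=1}^K (y_j − p̂_j(α))² + (1 − Σ_{j=1}^K p̂_j(α)²)/(S(α)+1) + β·[log Γ(S(α)) − Σ_{k=1}^K log Γ(α_k) + Σ_{k=1}^K (α_k − λ_k)(ψ(α_k) − ψ(S(α)))]. Then for every index i, the partial derivative satisfies |∂L/∂α_i| ≤ 2 + 1/(K+1)² + 2/(K(K+1)) + β·(2 + 1/(min_j λ_j) + 1/‖λ‖₁). -/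
open Real Filter Topology Finset Function

noncomputable def logGammaTerm (k : ℕ) (x : ℝ) : ℝ :=
  x / (k + 1) - (log (x + (k + 1)) - log (k + 1))

lemma logGammaTerm_nonneg (k : ℕ) {x : ℝ} (hx : 0 ≤ x) : 0 ≤ logGammaTerm k x := by
  have hk : (0 : ℝ) < k + 1 := by positivity
  have := log_le_sub_one_of_pos (show 0 < (x + (k + 1)) / (k + 1) by positivity)
  rw [log_div (by positivity) hk.ne', add_div, div_self hk.ne'] at this
  rw [logGammaTerm]
  linarith

lemma logGammaSeq_eq_sum_logGammaTerm (x : ℝ) (n : ℕ) :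
    BohrMollerup.logGammaSeq x n
      = ∑ k ∈ range n, logGammaTerm k x - log x - x * (harmonic n - log n) := by
  have hfact : log (n.factorial : ℝ) = ∑ k ∈ range n, log ((k : ℝ) + 1) := by
    rw [← prod_range_add_one_eq_factorial, Nat.cast_prod,
      log_prod fun k _ => by positivity]
    push_cast
    rfl
  simp only [BohrMollerup.logGammaSeq, logGammaTerm, hfact, sum_range_succ', harmonic,
    sum_sub_distrib]
  push_cast
  rw [mul_sub, mul_sum]
  simp only [add_zero, div_eq_mul_inv]
  ring

lemma hasSum_logGammaTerm {x : ℝ} (hx : 0 < x) :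
    HasSum (logGammaTerm · x) (log (Gamma x) + log x + x * eulerMascheroniConstant) := by
  rw [hasSum_iff_tendsto_nat_of_nonneg fun k => logGammaTerm_nonneg k hx.le]
  have := ((BohrMollerup.tendsto_log_gamma hx).add_const (log x)).add
    (tendsto_harmonic_sub_log.const_mul x)
  refine this.congr fun n => ?_
  rw [logGammaSeq_eq_sum_logGammaTerm]
  ring

lemma hasDerivAt_logGammaTerm (k : ℕ) {x : ℝ} (hx : x + (k + 1) ≠ 0) :
    HasDerivAt (logGammaTerm k) (1 / (k + 1) - 1 / (x + (k + 1))) x :=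
  ((hasDerivAt_id x).div_const _).sub
    ((((hasDerivAt_id x).add_const _).log hx).sub_const _)

lemma hasDerivAt_one_div_sub_one_div_add (a : ℝ) {x : ℝ} (hx : x + a ≠ 0) :
    HasDerivAt (fun y => 1 / a - 1 / (y + a)) (1 / (x + a) ^ 2) x := by
  refine (((hasDerivAt_const x 1).fun_div ((hasDerivAt_id' x).add_const a) hx).const_sub
    (1 / a)).congr_deriv ?_
  ring

lemma summable_one_div_nat_add_one_sq : Summable fun k : ℕ => 1 / ((k : ℝ) + 1) ^ 2 := by
  simpa using (summable_nat_add_iff 1).2 (Real.summable_one_div_nat_pow.2 one_lt_two)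

lemma abs_one_div_sub_one_div_add_le {x : ℝ} (hx : 0 ≤ x) (k : ℕ) :
    |1 / ((k : ℝ) + 1) - 1 / (x + (k + 1))| ≤ x * (1 / ((k : ℝ) + 1) ^ 2) := by
  have hk : (0 : ℝ) < k + 1 := by positivity
  rw [div_sub_div _ _ hk.ne' (by positivity),
    abs_of_nonneg (div_nonneg (by linarith) (by positivity)), div_le_iff₀ (by positivity)]
  field_simp
  nlinarith

lemma hasDerivAt_tsum_logGammaTerm {x : ℝ} (hx : 0 < x) :
    HasDerivAt (fun y => ∑' k, logGammaTerm k y)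
      (∑' k : ℕ, (1 / ((k : ℝ) + 1) - 1 / (x + (k + 1)))) x := by
  have hmem : x ∈ Set.Ioo 0 (x + 1) := ⟨hx, by linarith⟩
  refine hasDerivAt_tsum_of_isPreconnected (summable_one_div_nat_add_one_sq.mul_left (x + 1))
    isOpen_Ioo isPreconnected_Ioo
    (fun k y hy => hasDerivAt_logGammaTerm k (by have := hy.1; positivity))
    (fun k y hy => ?_) hmem (hasSum_logGammaTerm hx).summable hmem
  exact (abs_one_div_sub_one_div_add_le hy.1.le k).trans
    (mul_le_mul_of_nonneg_right hy.2.le (by positivity))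

lemma hasDerivAt_tsum_one_div_sub_one_div_add {x : ℝ} (hx : 0 < x) :
    HasDerivAt (fun y => ∑' k : ℕ, (1 / ((k : ℝ) + 1) - 1 / (y + (k + 1))))
      (∑' k : ℕ, 1 / (x + (k + 1)) ^ 2) x := by
  refine hasDerivAt_tsum_of_isPreconnected summable_one_div_nat_add_one_sq isOpen_Ioi
    isPreconnected_Ioi
    (fun k y hy => hasDerivAt_one_div_sub_one_div_add _ (by have : 0 < y := hy; positivity))
    (fun k y hy => ?_) hx ?_ hx
  · have : 0 < y := hy
    rw [norm_of_nonneg (by positivity)]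
    exact one_div_le_one_div_of_le (by positivity)
      (pow_le_pow_left₀ (by positivity) (by linarith) 2)
  · exact .of_norm_bounded (summable_one_div_nat_add_one_sq.mul_left x)
      fun k => abs_one_div_sub_one_div_add_le hx.le k

lemma hasDerivAt_log_Gamma {x : ℝ} (hx : 0 < x) :
    HasDerivAt (fun y => log (Gamma y)) (digamma x) x :=
  ((differentiableAt_Gamma fun m => by linarith [m.cast_nonneg (α := ℝ)]).log
    (Gamma_pos_of_pos hx).ne').hasDerivAt

lemma digamma_eq_tsum {x : ℝ} (hx : 0 < x) :
    digamma x = ∑' k : ℕ, (1 / ((k : ℝ) + 1) - 1 / (x + (k + 1))) - 1 / x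
      - eulerMascheroniConstant := by
  have hser := ((hasDerivAt_tsum_logGammaTerm hx).sub (hasDerivAt_log hx.ne')).sub
    ((hasDerivAt_id' x).mul_const eulerMascheroniConstant)
  have hlog : (fun y => log (Gamma y)) =ᶠ[𝓝 x]
      fun y => ∑' k, logGammaTerm k y - log y - y * eulerMascheroniConstant := by
    filter_upwards [lt_mem_nhds hx] with y hy
    linarith [(hasSum_logGammaTerm hy).tsum_eq]
  rw [(hasDerivAt_log_Gamma hx).unique (hser.congr_of_eventuallyEq hlog)]
  ring

lemma hasDerivAt_digamma {x : ℝ} (hx : 0 < x) :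
    HasDerivAt digamma (∑' k : ℕ, 1 / (x + (k + 1)) ^ 2 + 1 / x ^ 2) x := by
  have hser := ((hasDerivAt_tsum_one_div_sub_one_div_add hx).sub
    ((hasDerivAt_const x 1).fun_div (hasDerivAt_id' x) hx.ne')).sub_const eulerMascheroniConstant
  refine (hser.congr_of_eventuallyEq ?_).congr_deriv (by ring)
  filter_upwards [lt_mem_nhds hx] with y hy
  exact digamma_eq_tsum hy

lemma tsum_one_div_add_nat_add_one_sq_le {x : ℝ} (hx : 0 < x) :
    ∑' k : ℕ, 1 / (x + (k + 1)) ^ 2 ≤ 1 / x := by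
  refine Real.tsum_le_of_sum_range_le (fun k => by positivity) fun n => ?_
  calc ∑ k ∈ range n, 1 / (x + (k + 1)) ^ 2
      ≤ ∑ k ∈ range n, (1 / (x + k) - 1 / (x + (k + 1))) := by
        refine sum_le_sum fun k _ => ?_
        rw [div_sub_div _ _ (by positivity) (by positivity),
          div_le_div_iff₀ (by positivity) (by positivity)]
        nlinarith
    _ = 1 / x - 1 / (x + n) := by
        simpa [add_assoc] using sum_range_sub' (fun k : ℕ => 1 / (x + k)) n
    _ ≤ 1 / x := by
        have : 0 ≤ 1 / (x + n) := by positivity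
        linarith

lemma sub_mul_deriv_digamma_mem_Icc {a x : ℝ} (ha : 1 ≤ a) (hax : a ≤ x) :
    (x - a) * deriv digamma x ∈ Set.Icc 0 1 := by
  have hx : 0 < x := by linarith
  rw [(hasDerivAt_digamma hx).deriv]
  have hT := tsum_one_div_add_nat_add_one_sq_le hx
  have hT0 : 0 ≤ ∑' k : ℕ, 1 / (x + (k + 1)) ^ 2 := tsum_nonneg fun k => by positivity
  constructor
  · have : 0 ≤ x - a := by linarith
    positivity
  · calc (x - a) * (∑' k : ℕ, 1 / (x + (k + 1)) ^ 2 + 1 / x ^ 2)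
        ≤ (x - 1) * (1 / x + 1 / x ^ 2) := by gcongr; linarith
      _ = 1 - 1 / x ^ 2 := by field_simp; ring
      _ ≤ 1 := by
        have : 0 ≤ 1 / x ^ 2 := by positivity
        linarith

section ProbabilityVector

variable {ι : Type*} [Fintype ι] {p : ι → ℝ}

lemma le_one_of_sum_eq_one (hp0 : ∀ j, 0 ≤ p j) (hp1 : ∑ j, p j = 1) (j : ι) : p j ≤ 1 :=
  hp1 ▸ single_le_sum (fun k _ => hp0 k) (mem_univ j)

lemma sum_sq_le_one (hp0 : ∀ j, 0 ≤ p j) (hp1 : ∑ j, p j = 1) : ∑ j, p j ^ 2 ≤ 1 :=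
  hp1 ▸ sum_le_sum fun j _ => by nlinarith [le_one_of_sum_eq_one hp0 hp1 j, hp0 j]

lemma abs_sub_sum_sq_le_one (hp0 : ∀ j, 0 ≤ p j) (hp1 : ∑ j, p j = 1) (i : ι) :
    |p i - ∑ j, p j ^ 2| ≤ 1 := by
  have := sum_sq_le_one hp0 hp1
  have := le_one_of_sum_eq_one hp0 hp1 i
  have := hp0 i
  have : 0 ≤ ∑ j, p j ^ 2 := sum_nonneg fun j _ => sq_nonneg (p j)
  exact abs_sub_le_iff.2 ⟨by linarith, by linarith⟩

variable [DecidableEq ι]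

lemma sum_abs_pi_single_sub (hp0 : ∀ j, 0 ≤ p j) (hp1 : ∑ j, p j = 1) (i : ι) :
    ∑ j, |(Pi.single i 1 : ι → ℝ) j - p j| = 2 * (1 - p i) := by
  have hrest : ∑ j ∈ {i}ᶜ, p j = 1 - p i := by
    rw [← hp1, Fintype.sum_eq_add_sum_compl i p]
    ring
  rw [Fintype.sum_eq_add_sum_compl i, Pi.single_eq_same,
    abs_of_nonneg (sub_nonneg.2 (le_one_of_sum_eq_one hp0 hp1 i)), ← hrest]
  rw [two_mul, add_right_inj]
  refine sum_congr rfl fun j hj => ?_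
  rw [Pi.single_eq_of_ne (by simpa using hj), zero_sub, abs_neg, abs_of_nonneg (hp0 j)]

lemma abs_sum_mul_pi_single_sub_le (hp0 : ∀ j, 0 ≤ p j) (hp1 : ∑ j, p j = 1) {c : ι → ℝ}
    (hc : ∀ j, |c j| ≤ 1) (i : ι) :
    |∑ j, c j * ((Pi.single i 1 : ι → ℝ) j - p j)| ≤ 2 * (1 - p i) :=
  calc |∑ j, c j * ((Pi.single i 1 : ι → ℝ) j - p j)|
      ≤ ∑ j, |c j * ((Pi.single i 1 : ι → ℝ) j - p j)| := abs_sum_le_sum_abs _ _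
    _ ≤ ∑ j, |(Pi.single i 1 : ι → ℝ) j - p j| := sum_le_sum fun j _ => by
        rw [abs_mul]
        exact mul_le_of_le_one_left (abs_nonneg _) (hc j)
    _ = 2 * (1 - p i) := sum_abs_pi_single_sub hp0 hp1 i

end ProbabilityVector

lemma hasDerivAt_update_apply {ι : Type*} [DecidableEq ι] (α : ι → ℝ) (i j : ι) (t : ℝ) :
    HasDerivAt (fun s => update α i s j) ((Pi.single i 1 : ι → ℝ) j) t :=
  hasDerivAt_pi.1 (hasDerivAt_update α i t) j

lemma hasDerivAt_sum_update {ι : Type*} [Fintype ι] [DecidableEq ι] (α : ι → ℝ) (i : ι)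
    (t : ℝ) : HasDerivAt (fun s => ∑ k, update α i s k) 1 t := by
  simpa using HasDerivAt.fun_sum fun k (_ : k ∈ univ) => hasDerivAt_update_apply α i k t

section Dirichlet

variable {ι : Type*} [Fintype ι]

noncomputable def dirichletMean (α : ι → ℝ) (j : ι) : ℝ := α j / ∑ k, α k

/-- `KL(Dir(α) ‖ Dir(λ))` without the terms that depend on `λ` alone. -/
noncomputable def dirichletKL (lam α : ι → ℝ) : ℝ :=
  log (Gamma (∑ k, α k)) - ∑ k, log (Gamma (α k))
    + ∑ k, (α k - lam k) * (digamma (α k) - digamma (∑ k', α k'))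

variable {α : ι → ℝ}

lemma dirichletMean_nonneg (hα : ∀ j, 0 ≤ α j) (j : ι) : 0 ≤ dirichletMean α j :=
  div_nonneg (hα j) (sum_nonneg fun k _ => hα k)

lemma sum_dirichletMean (hS : ∑ k, α k ≠ 0) : ∑ j, dirichletMean α j = 1 := by
  simp only [dirichletMean]
  rw [← sum_div, div_self hS]

lemma abs_dirichletKL_deriv_le {lam : ι → ℝ} (hlam : ∀ j, 1 ≤ lam j) (hα : ∀ j, lam j ≤ α j)
    (i : ι) :
    |(α i - lam i) * deriv digamma (α i)
        - (∑ k, α k - ∑ k, lam k) * deriv digamma (∑ k, α k)| ≤ 1 := by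
  have hΛ : 1 ≤ ∑ k, lam k :=
    (hlam i).trans (single_le_sum (fun k _ => zero_le_one.trans (hlam k)) (mem_univ i))
  have hi := sub_mul_deriv_digamma_mem_Icc (hlam i) (hα i)
  have hS := sub_mul_deriv_digamma_mem_Icc hΛ (sum_le_sum fun k _ => hα k)
  exact abs_sub_le_iff.2 ⟨by linarith [hi.2, hS.1], by linarith [hi.1, hS.2]⟩

variable {i : ι}

lemma abs_variance_deriv_le (hα : ∀ j, 0 ≤ α j) {s : ℝ} (hs : 0 < s) (hsS : s ≤ ∑ k, α k) :
    |-(2 / (∑ k, α k) * (dirichletMean α i - ∑ j, dirichletMean α j ^ 2)) / (∑ k, α k + 1)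
        - (1 - ∑ j, dirichletMean α j ^ 2) / (∑ k, α k + 1) ^ 2|
      ≤ 2 / (s * (s + 1)) + 1 / (s + 1) ^ 2 := by
  set S := ∑ k, α k
  have hS : 0 < S := hs.trans_le hsS
  have hp0 := dirichletMean_nonneg hα
  have hp1 := sum_dirichletMean hS.ne'
  have hQ1 := sum_sq_le_one hp0 hp1
  refine (abs_sub _ _).trans (add_le_add ?_ ?_)
  · rw [abs_div, abs_neg, abs_mul, abs_of_pos (by positivity : 0 < 2 / S),
      abs_of_pos (by positivity : 0 < S + 1)]
    calc 2 / S * |dirichletMean α i - ∑ j, dirichletMean α j ^ 2| / (S + 1)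
        ≤ 2 / S * 1 / (S + 1) := by
          gcongr
          exact abs_sub_sum_sq_le_one hp0 hp1 i
      _ = 2 / (S * (S + 1)) := by field_simp
      _ ≤ 2 / (s * (s + 1)) := by gcongr
  · rw [abs_of_nonneg (div_nonneg (sub_nonneg.2 hQ1) (by positivity))]
    calc (1 - ∑ j, dirichletMean α j ^ 2) / (S + 1) ^ 2 ≤ 1 / (S + 1) ^ 2 := by
          gcongr
          linarith [sum_nonneg fun j (_ : j ∈ univ) => sq_nonneg (dirichletMean α j)]
      _ ≤ 1 / (s + 1) ^ 2 := by gcongr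

variable [DecidableEq ι]

lemma abs_sqError_deriv_le {y : ι → ℝ} (hy : ∀ j, y j ∈ Set.Icc 0 1)
    (hα : ∀ j, 0 < α j) (hαi : 1 ≤ α i) :
    |-(2 / ∑ k, α k) * ∑ j, (y j - dirichletMean α j) *
      ((Pi.single i 1 : ι → ℝ) j - dirichletMean α j)| ≤ 1 := by
  set S := ∑ k, α k
  have hS : 0 < S := sum_pos (fun k _ => hα k) ⟨i, mem_univ i⟩
  have hp0 := dirichletMean_nonneg fun j => (hα j).le
  have hp1 := sum_dirichletMean hS.ne'
  have hc : ∀ j, |y j - dirichletMean α j| ≤ 1 := fun j => abs_sub_le_iff.2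
    ⟨by linarith [(hy j).2, hp0 j], by linarith [(hy j).1, le_one_of_sum_eq_one hp0 hp1 j]⟩
  have hαS : α i ≤ S := single_le_sum (fun k _ => (hα k).le) (mem_univ i)
  rw [abs_mul, abs_neg, abs_of_pos (by positivity : 0 < 2 / S)]
  calc 2 / S
        * |∑ j, (y j - dirichletMean α j) * ((Pi.single i 1 : ι → ℝ) j - dirichletMean α j)|
      ≤ 2 / S * (2 * (1 - α i / S)) := by
        gcongr
        exact abs_sum_mul_pi_single_sub_le hp0 hp1 hc i
    _ = 4 * (S - α i) / S ^ 2 := by field_simp; ring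
    _ ≤ 1 := by
        rw [div_le_one (by positivity)]
        nlinarith [sq_nonneg (S - 2)]

lemma hasDerivAt_dirichletMean_update (hS : ∑ k, α k ≠ 0) (j : ι) :
    HasDerivAt (fun t => dirichletMean (update α i t) j)
      (((Pi.single i 1 : ι → ℝ) j - dirichletMean α j) / ∑ k, α k) (α i) := by
  have h := (hasDerivAt_update_apply α i j (α i)).fun_div (hasDerivAt_sum_update α i (α i))
    (by rwa [update_eq_self])
  rw [update_eq_self] at h
  exact h.congr_deriv (by simp only [dirichletMean]; field_simp)

lemma hasDerivAt_sum_sq_sub_dirichletMean_update (y : ι → ℝ) (hS : ∑ k, α k ≠ 0) :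
    HasDerivAt (fun t => ∑ j, (y j - dirichletMean (update α i t) j) ^ 2)
      (-(2 / ∑ k, α k) * ∑ j, (y j - dirichletMean α j) *
        ((Pi.single i 1 : ι → ℝ) j - dirichletMean α j)) (α i) := by
  have h := HasDerivAt.fun_sum fun j (_ : j ∈ univ) =>
    ((hasDerivAt_dirichletMean_update (i := i) hS j).const_sub (y j)).pow 2
  rw [update_eq_self] at h
  rw [mul_sum]
  exact h.congr_deriv (sum_congr rfl fun j _ => by ring)

lemma hasDerivAt_sum_dirichletMean_update_sq (hS : ∑ k, α k ≠ 0) :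
    HasDerivAt (fun t => ∑ j, dirichletMean (update α i t) j ^ 2)
      (2 / (∑ k, α k) * (dirichletMean α i - ∑ j, dirichletMean α j ^ 2)) (α i) := by
  have h := HasDerivAt.fun_sum fun j (_ : j ∈ univ) =>
    (hasDerivAt_dirichletMean_update (i := i) hS j).pow 2
  rw [update_eq_self] at h
  have hδ : ∑ j, dirichletMean α j * (Pi.single i 1 : ι → ℝ) j = dirichletMean α i := by
    simp [Pi.single_apply]
  rw [← hδ, ← sum_sub_distrib, mul_sum]
  exact h.congr_deriv (sum_congr rfl fun j _ => by ring)

lemma hasDerivAt_one_sub_sum_dirichletMean_update_sq_div (hS : 0 < ∑ k, α k) :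
    HasDerivAt
      (fun t => (1 - ∑ j, dirichletMean (update α i t) j ^ 2) / ((∑ k, update α i t k) + 1))
      (-(2 / (∑ k, α k) * (dirichletMean α i - ∑ j, dirichletMean α j ^ 2)) / (∑ k, α k + 1)
        - (1 - ∑ j, dirichletMean α j ^ 2) / (∑ k, α k + 1) ^ 2) (α i) := by
  have h := ((hasDerivAt_sum_dirichletMean_update_sq (i := i) hS.ne').const_sub 1).fun_div
    ((hasDerivAt_sum_update α i (α i)).add_const 1) (by rw [update_eq_self]; positivity)
  rw [update_eq_self] at h
  exact h.congr_deriv (by field_simp)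

lemma hasDerivAt_dirichletKL_update (lam : ι → ℝ) (hα : ∀ k, 0 < α k) :
    HasDerivAt (fun t => dirichletKL lam (update α i t))
      ((α i - lam i) * deriv digamma (α i)
        - (∑ k, α k - ∑ k, lam k) * deriv digamma (∑ k, α k)) (α i) := by
  have hS : 0 < ∑ k, α k := sum_pos (fun k _ => hα k) ⟨i, mem_univ i⟩
  have hψ : ∀ {x : ℝ}, 0 < x → HasDerivAt digamma (deriv digamma x) x := fun hx =>
    (hasDerivAt_digamma hx).differentiableAt.hasDerivAt
  have hsum := hasDerivAt_sum_update α i (α i)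
  have hcoord := (hasDerivAt_update_apply α i · (α i))
  have hS' : ∑ k, α k = ∑ k, update α i (α i) k := by rw [update_eq_self]
  have hlogS := (hasDerivAt_log_Gamma hS).comp_of_eq (α i) hsum hS'
  have hψS := (hψ hS).comp_of_eq (α i) hsum hS'
  have hlog := HasDerivAt.fun_sum fun k (_ : k ∈ univ) =>
    (hasDerivAt_log_Gamma (hα k)).comp_of_eq (α i) (hcoord k) (by rw [update_eq_self])
  have hcross := HasDerivAt.fun_sum fun k (_ : k ∈ univ) =>
    ((hcoord k).sub_const (lam k)).mul
      (((hψ (hα k)).comp_of_eq (α i) (hcoord k) (by rw [update_eq_self])).sub hψS)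
  have h := (hlogS.sub hlog).add hcross
  rw [update_eq_self] at h
  refine h.congr_deriv ?_
  simp only [Pi.single_apply, mul_ite, ite_mul, mul_one, one_mul, mul_zero, zero_mul, sum_ite_eq',
    mem_univ, if_true, Pi.sub_apply, comp_apply, update_eq_self, mul_sub, sum_add_distrib,
    sum_sub_distrib, ← sum_mul]
  ring

end Dirichlet

theorem viedl_loss_lipschitz_general (K : ℕ) (β : ℝ) (hβ : 0 ≤ β)
    (y : Fin K → ℝ) (hy : ∀ k, y k ∈ Set.Icc (0 : ℝ) 1)
    (lam : Fin K → ℝ) (hlam : ∀ j, 1 ≤ lam j)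
    (α : Fin K → ℝ) (hα : ∀ j, lam j ≤ α j) (i : Fin K) :
    ∃ d : ℝ,
      HasDerivAt
        (fun t : ℝ =>
          (∑ j, (y j - Function.update α i t j / ∑ k, Function.update α i t k) ^ 2)
          + (1 - ∑ j, (Function.update α i t j / ∑ k, Function.update α i t k) ^ 2)
              / ((∑ k, Function.update α i t k) + 1)
          + β * (Real.log (Real.Gamma (∑ k, Function.update α i t k))
              - ∑ k, Real.log (Real.Gamma (Function.update α i t k))
              + ∑ k, (Function.update α i t k - lam k) *
                  (digamma (Function.update α i t k)
                    - digamma (∑ k', Function.update α i t k'))))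
        d (α i) ∧
      |d| ≤ 2 + 1 / ((K : ℝ) + 1) ^ 2 + 2 / ((K : ℝ) * ((K : ℝ) + 1))
              + β * (2 + 1 / (⨅ j, lam j) + 1 / ∑ k, lam k) := by
  have hα0 : ∀ j, 0 < α j := fun j => by linarith [hlam j, hα j]
  have hS : 0 < ∑ k, α k := sum_pos (fun k _ => hα0 k) ⟨i, mem_univ i⟩
  have hKS : (K : ℝ) ≤ ∑ k, α k := by
    simpa using sum_le_sum fun j (_ : j ∈ univ) => (hlam j).trans (hα j)
  refine ⟨_, ((hasDerivAt_sum_sq_sub_dirichletMean_update y hS.ne').add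
    (hasDerivAt_one_sub_sum_dirichletMean_update_sq_div hS)).add
    ((hasDerivAt_dirichletKL_update lam hα0).const_mul β), ?_⟩
  have hmse := abs_sqError_deriv_le hy hα0 ((hlam i).trans (hα i))
  have hvar := abs_variance_deriv_le (i := i) (fun j => (hα0 j).le) (by exact_mod_cast i.pos) hKS
  have hkl := abs_dirichletKL_deriv_le hlam hα i
  have hrest : 0 ≤ 1 / (⨅ j, lam j) + 1 / ∑ k, lam k := by
    have := Real.iInf_nonneg fun j => zero_le_one.trans (hlam j)
    have := sum_nonneg fun j (_ : j ∈ univ) => zero_le_one.trans (hlam j)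
    positivity
  refine (abs_add_le _ _).trans ?_
  rw [abs_mul, abs_of_nonneg hβ]
  have := (abs_add_le _ _).trans (add_le_add hmse hvar)
  linarith [mul_le_mul_of_nonneg_left hkl hβ, mul_nonneg hβ hrest]

/-- The VI-EDL variational loss
`L(α) = Σ_j (y_j − p̂_j(α))² + (1 − Σ_j p̂_j(α)²)/(S(α)+1)
  + β·[log Γ(S(α)) − Σ_k log Γ(α_k) + Σ_k (α_k − λ_k)(ψ(α_k) − ψ(S(α)))]`
has partial derivatives bounded by
`2 + 1/(K+1)² + 2/(K(K+1)) + β·(2 + 1/(min_j λ_j) + 1/‖λ‖₁)`. -/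
theorem viedl_loss_lipschitz (K : ℕ) (hK : 1 ≤ K) (β : ℝ) (hβ : 0 ≤ β)
    (y : Fin K → ℝ) (hy : ∀ k, y k ∈ Set.Icc (0 : ℝ) 1)
    (lam : Fin K → ℝ) (hlam : ∀ j, 1 ≤ lam j)
    (α : Fin K → ℝ) (hα : ∀ j, lam j ≤ α j) (i : Fin K) :
    ∃ d : ℝ,
      HasDerivAt
        (fun t : ℝ =>
          (∑ j, (y j - Function.update α i t j / ∑ k, Function.update α i t k) ^ 2)
          + (1 - ∑ j, (Function.update α i t j / ∑ k, Function.update α i t k) ^ 2)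
              / ((∑ k, Function.update α i t k) + 1)
          + β * (Real.log (Real.Gamma (∑ k, Function.update α i t k))
              - ∑ k, Real.log (Real.Gamma (Function.update α i t k))
              + ∑ k, (Function.update α i t k - lam k) *
                  (digamma (Function.update α i t k)
                    - digamma (∑ k', Function.update α i t k'))))
        d (α i) ∧
      |d| ≤ 2 + 1 / ((K : ℝ) + 1) ^ 2 + 2 / ((K : ℝ) * ((K : ℝ) + 1))
              + β * (2 + 1 / (⨅ j, lam j) + 1 / ∑ k, lam k) :=
  viedl_loss_lipschitz_general K β hβ y hy lam hlam α hα i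
end
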